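/- Suppose each V_k is a subspace of a finite-dimensional complex vector space V'_k, with a chosen complement T_k, so V'_k = V_k ⊕ T_k. For an ADHM datum (B,i,j) on (V,W), let its extension by zero (B̃,ĩ,j̃) be the ADHM datum on (V',W) with B̃_h equal to B_h on V_{out(h)} (valued in V_{in(h)} ⊆ V'_{in(h)}) and zero on T_{out(h)}, ĩ_k = i_k followed by the inclusion V_k ⊆ V'_k, and j̃_k equal to j_k on V_k and zero on T_k. Let (B^1,i^1,j^1) and (B^2,i^2,j^2) be ADHM data on (V,W) with μ(B^a,i^a,j^a) = 0 whose G_V-orbits are closed subsets of M (standard topology). If there exists g' ∈ G_{V'} = ∏_k GL(V'_k) with g'·(B̃^1,ĩ^1,j̃^1) = (B̃^2,ĩ^2,j̃^2), then there exists g ∈ G_V with g·(B^1,i^1,j^1) = (B^2,i^2,j^2). (Injectivity of the natural morphism M_0(v,w) → M_0(v',w) of affine quotients.) -/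

import Mathlib

noncomputable section

/-- The data of a finite graph without edge loops, presented by its set `H` of oriented
edges over the vertex set `I`: source and target maps `src`, `tgt`, and a fixed-point-free
orientation-reversing involution `bar`. -/
structure GraphData (I H : Type) where
  src : H → I
  tgt : H → I
  bar : H → H
  bar_invol : ∀ h, bar (bar h) = h
  bar_ne_self : ∀ h, bar h ≠ h
  src_bar : ∀ h, src (bar h) = tgt h
  tgt_bar : ∀ h, tgt (bar h) = src h
  no_loops : ∀ h, src h ≠ tgt h

/-- Transport of the fibres of a family of normed spaces along an equality of indices. -/
def vCast {I : Type} (V : I → Type)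
    [∀ k, NormedAddCommGroup (V k)] [∀ k, NormedSpace ℂ (V k)]
    {k l : I} (e : k = l) : V k ≃L[ℂ] V l := by
  subst e
  exact ContinuousLinearEquiv.refl ℂ (V k)

/-- Stability of an ADHM datum `(B, i, j)`: the only family of subspaces `S k ⊆ V k`
which is `B`-invariant and contained in `ker (j k)` is the zero family. -/
def IsStable {I H : Type} (G : GraphData I H) (V W : I → Type)
    [∀ k, NormedAddCommGroup (V k)] [∀ k, NormedSpace ℂ (V k)]
    [∀ k, NormedAddCommGroup (W k)] [∀ k, NormedSpace ℂ (W k)]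
    (B : ∀ h : H, V (G.src h) →L[ℂ] V (G.tgt h))
    (j : ∀ k : I, V k →L[ℂ] W k) : Prop :=
  ∀ S : ∀ k : I, Submodule ℂ (V k),
    (∀ h : H, ∀ x ∈ S (G.src h), B h x ∈ S (G.tgt h)) →
    (∀ k : I, ∀ x ∈ S k, j k x = 0) →
    ∀ k : I, S k = ⊥

/-- For an oriented edge `h`, the composite `A ∘ A'` of a map `A` along `h` and a map `A'`
along `bar h`, as an endomorphism of `V (tgt h)`. -/
def barComp {I H : Type} (G : GraphData I H) (V : I → Type)
    [∀ k, NormedAddCommGroup (V k)] [∀ k, NormedSpace ℂ (V k)] (h : H)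
    (A : V (G.src h) →L[ℂ] V (G.tgt h))
    (A' : V (G.src (G.bar h)) →L[ℂ] V (G.tgt (G.bar h))) :
    V (G.tgt h) →L[ℂ] V (G.tgt h) :=
  A.comp ((vCast V (G.tgt_bar h) : V (G.tgt (G.bar h)) →L[ℂ] V (G.src h)).comp
    (A'.comp ((vCast V (G.src_bar h)).symm : V (G.tgt h) →L[ℂ] V (G.src (G.bar h)))))

/-- The `k`-th component of the moment map `μ(B, i, j) = ε B B + i j`. -/
def momentMap {I H : Type} [Fintype H] [DecidableEq I] (G : GraphData I H)
    (V W : I → Type)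
    [∀ k, NormedAddCommGroup (V k)] [∀ k, NormedSpace ℂ (V k)]
    [∀ k, NormedAddCommGroup (W k)] [∀ k, NormedSpace ℂ (W k)]
    (ε : H → ℂ)
    (B : ∀ h : H, V (G.src h) →L[ℂ] V (G.tgt h))
    (i : ∀ k : I, W k →L[ℂ] V k) (j : ∀ k : I, V k →L[ℂ] W k) (k : I) :
    V k →L[ℂ] V k :=
  (∑ h : H, if e : G.tgt h = k then
      ((vCast V e : V (G.tgt h) →L[ℂ] V k).comp
        ((ε h • barComp G V h (B h) (B (G.bar h))).comp
          ((vCast V e).symm : V k →L[ℂ] V (G.tgt h))))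
    else 0)
    + (i k).comp (j k)

/-- The action of `g ∈ G_V = ∏ₖ GL(V_k)` on the `B`-component of an ADHM datum. -/
def actB {I H : Type} (G : GraphData I H) (V : I → Type)
    [∀ k, NormedAddCommGroup (V k)] [∀ k, NormedSpace ℂ (V k)]
    (g : ∀ k : I, V k ≃L[ℂ] V k)
    (B : ∀ h : H, V (G.src h) →L[ℂ] V (G.tgt h)) :
    ∀ h : H, V (G.src h) →L[ℂ] V (G.tgt h) :=
  fun h => ((g (G.tgt h) : V (G.tgt h) →L[ℂ] V (G.tgt h)).comp (B h)).comp
    ((g (G.src h)).symm : V (G.src h) →L[ℂ] V (G.src h))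

/-- The action of `g ∈ G_V` on the `i`-component of an ADHM datum. -/
def actI {I : Type} (V W : I → Type)
    [∀ k, NormedAddCommGroup (V k)] [∀ k, NormedSpace ℂ (V k)]
    [∀ k, NormedAddCommGroup (W k)] [∀ k, NormedSpace ℂ (W k)]
    (g : ∀ k : I, V k ≃L[ℂ] V k) (i : ∀ k : I, W k →L[ℂ] V k) :
    ∀ k : I, W k →L[ℂ] V k :=
  fun k => (g k : V k →L[ℂ] V k).comp (i k)

/-- The action of `g ∈ G_V` on the `j`-component of an ADHM datum. -/
def actJ {I : Type} (V W : I → Type)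
    [∀ k, NormedAddCommGroup (V k)] [∀ k, NormedSpace ℂ (V k)]
    [∀ k, NormedAddCommGroup (W k)] [∀ k, NormedSpace ℂ (W k)]
    (g : ∀ k : I, V k ≃L[ℂ] V k) (j : ∀ k : I, V k →L[ℂ] W k) :
    ∀ k : I, V k →L[ℂ] W k :=
  fun k => (j k).comp ((g k).symm : V k →L[ℂ] V k)


open Module in
/-- Linear-algebra key lemma: if the block matrix `[A B; C D]` of a bijection `V ⊕ T ≃ V ⊕ T`
is such that `A x = 0, C x = 0 → x = 0` (injectivity on `V`) and `im A + im B = V`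
(surjectivity onto `V`), then `A + B ∘ Q ∘ C` is bijective for some `Q : T → T`. -/
lemma key_exists {V T : Type} [AddCommGroup V] [Module ℂ V] [FiniteDimensional ℂ V]
    [AddCommGroup T] [Module ℂ T] [FiniteDimensional ℂ T]
    (A : V →ₗ[ℂ] V) (B : T →ₗ[ℂ] V) (C : V →ₗ[ℂ] T)
    (h1 : ∀ x, A x = 0 → C x = 0 → x = 0)
    (h2 : ∀ v : V, ∃ x t, A x + B t = v) :
    ∃ Q : T →ₗ[ℂ] T, Function.Bijective (A + B ∘ₗ Q ∘ₗ C) := by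
  obtain ⟨Wc, hWc⟩ := Submodule.exists_isCompl (LinearMap.range A)
  set π : V →ₗ[ℂ] ↥Wc := Wc.projectionOnto (LinearMap.range A) hWc.symm with hπ
  have hπA : ∀ x, π (A x) = 0 := fun x =>
    Submodule.projectionOnto_apply_of_mem_right hWc.symm (LinearMap.mem_range_self A x)
  have hBbsurj : LinearMap.range (π ∘ₗ B) = ⊤ := by
    rw [LinearMap.range_eq_top]
    intro w
    obtain ⟨x, t, hxt⟩ := h2 (w : V)
    refine ⟨t, ?_⟩
    have h := congrArg π hxt
    rw [map_add, hπA, zero_add] at h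
    rw [LinearMap.comp_apply, h, hπ, Submodule.linearProjOfIsCompl_apply_left]
  obtain ⟨L, hL⟩ := (π ∘ₗ B).exists_rightInverse_of_surjective hBbsurj
  have hφinj : LinearMap.ker (C ∘ₗ (LinearMap.ker A).subtype) = ⊥ := by
    rw [LinearMap.ker_eq_bot']
    intro m hm
    rw [LinearMap.comp_apply, Submodule.coe_subtype] at hm
    exact Subtype.ext (h1 m.1 (LinearMap.mem_ker.mp m.2) hm)
  obtain ⟨φ', hφ'⟩ := (C ∘ₗ (LinearMap.ker A).subtype).exists_leftInverse_of_injective hφinj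
  have hrk : finrank ℂ ↥(LinearMap.ker A) = finrank ℂ ↥Wc := by
    have e1 := LinearMap.finrank_range_add_finrank_ker A
    have e2 := Submodule.finrank_add_eq_of_isCompl hWc
    omega
  set σ : ↥(LinearMap.ker A) ≃ₗ[ℂ] ↥Wc := LinearEquiv.ofFinrankEq _ _ hrk with hσ
  refine ⟨L ∘ₗ (σ.toLinearMap ∘ₗ φ'), ?_⟩
  have hFinj : Function.Injective (A + B ∘ₗ (L ∘ₗ (σ.toLinearMap ∘ₗ φ')) ∘ₗ C) := by
    rw [← LinearMap.ker_eq_bot, LinearMap.ker_eq_bot']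
    intro v hv
    rw [LinearMap.add_apply, LinearMap.comp_apply, LinearMap.comp_apply,
      LinearMap.comp_apply, LinearMap.comp_apply, LinearEquiv.coe_coe] at hv
    have hρ : σ (φ' (C v)) = 0 := by
      have h := congrArg π hv
      rw [map_add, map_zero, hπA, zero_add] at h
      have h' := LinearMap.ext_iff.mp hL (σ (φ' (C v)))
      rw [LinearMap.comp_apply, LinearMap.id_apply] at h'
      rw [LinearMap.comp_apply] at h'
      rw [h'] at h
      exact h
    have hAv : A v = 0 := by
      rw [hρ, map_zero, map_zero, add_zero] at hv
      exact hv
    have hvker : v ∈ LinearMap.ker A := LinearMap.mem_ker.mpr hAv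
    have e1 : φ' (C v) = ⟨v, hvker⟩ := by
      have h := LinearMap.ext_iff.mp hφ' ⟨v, hvker⟩
      rw [LinearMap.comp_apply, LinearMap.id_apply, LinearMap.comp_apply] at h
      exact h
    rw [e1] at hρ
    have : (⟨v, hvker⟩ : ↥(LinearMap.ker A)) = 0 := by
      apply σ.injective
      rw [hρ, map_zero]
    exact congrArg Subtype.val this
  exact ⟨hFinj, LinearMap.injective_iff_surjective.mp hFinj⟩

/-- Suppose each `V_k` is a subspace of `V'_k` with chosen complement
`T_k`. If two ADHM data on `(V, W)` with `μ = 0` and closed `G_V`-orbits have extensions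
by zero to `(V', W)` which lie in the same `G_{V'}`-orbit, then the original data lie in
the same `G_V`-orbit (injectivity of `M₀(v,w) → M₀(v',w)`). -/
theorem statement5
    {I H : Type} [Fintype I] [Fintype H] [DecidableEq I]
    (G : GraphData I H) (V' W : I → Type)
    [∀ k, NormedAddCommGroup (V' k)] [∀ k, NormedSpace ℂ (V' k)]
    [∀ k, FiniteDimensional ℂ (V' k)]
    [∀ k, NormedAddCommGroup (W k)] [∀ k, NormedSpace ℂ (W k)]
    [∀ k, FiniteDimensional ℂ (W k)]
    (Vs Ts : ∀ k : I, Submodule ℂ (V' k))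
    (hcompl : ∀ k : I, IsCompl (Vs k) (Ts k))
    (ε : H → ℂ) (hε0 : ∀ h, ε h ≠ 0) (hεbar : ∀ h, ε (G.bar h) = - ε h)
    -- two ADHM data on `(V, W)`, where `V k = Vs k`:
    (B1 B2 : ∀ h : H, ↥(Vs (G.src h)) →L[ℂ] ↥(Vs (G.tgt h)))
    (i1 i2 : ∀ k : I, W k →L[ℂ] ↥(Vs k))
    (j1 j2 : ∀ k : I, ↥(Vs k) →L[ℂ] W k)
    (hμ1 : ∀ k : I, momentMap G (fun k => ↥(Vs k)) W ε B1 i1 j1 k = 0)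
    (hμ2 : ∀ k : I, momentMap G (fun k => ↥(Vs k)) W ε B2 i2 j2 k = 0)
    -- the `G_V`-orbits of the two data are closed subsets of `M`:
    (hcl1 : IsClosed {m : (∀ h : H, ↥(Vs (G.src h)) →L[ℂ] ↥(Vs (G.tgt h))) ×
        (∀ k : I, W k →L[ℂ] ↥(Vs k)) × (∀ k : I, ↥(Vs k) →L[ℂ] W k) |
      ∃ g : ∀ k : I, ↥(Vs k) ≃L[ℂ] ↥(Vs k),
        m = (actB G (fun k => ↥(Vs k)) g B1, actI (fun k => ↥(Vs k)) W g i1,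
          actJ (fun k => ↥(Vs k)) W g j1)})
    (hcl2 : IsClosed {m : (∀ h : H, ↥(Vs (G.src h)) →L[ℂ] ↥(Vs (G.tgt h))) ×
        (∀ k : I, W k →L[ℂ] ↥(Vs k)) × (∀ k : I, ↥(Vs k) →L[ℂ] W k) |
      ∃ g : ∀ k : I, ↥(Vs k) ≃L[ℂ] ↥(Vs k),
        m = (actB G (fun k => ↥(Vs k)) g B2, actI (fun k => ↥(Vs k)) W g i2,
          actJ (fun k => ↥(Vs k)) W g j2)})
    -- the extensions by zero `(B̃ᵃ, ĩᵃ, j̃ᵃ)` of the two data to `(V', W)`: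
    (B1' B2' : ∀ h : H, V' (G.src h) →L[ℂ] V' (G.tgt h))
    (i1' i2' : ∀ k : I, W k →L[ℂ] V' k)
    (j1' j2' : ∀ k : I, V' k →L[ℂ] W k)
    (hB1'V : ∀ h : H, ∀ x : ↥(Vs (G.src h)),
      B1' h (x : V' (G.src h)) = ((B1 h x : ↥(Vs (G.tgt h))) : V' (G.tgt h)))
    (hB1'T : ∀ h : H, ∀ x ∈ Ts (G.src h), B1' h x = 0)
    (hi1' : ∀ k : I, ∀ w : W k, i1' k w = ((i1 k w : ↥(Vs k)) : V' k))
    (hj1'V : ∀ k : I, ∀ x : ↥(Vs k), j1' k (x : V' k) = j1 k x)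
    (hj1'T : ∀ k : I, ∀ x ∈ Ts k, j1' k x = 0)
    (hB2'V : ∀ h : H, ∀ x : ↥(Vs (G.src h)),
      B2' h (x : V' (G.src h)) = ((B2 h x : ↥(Vs (G.tgt h))) : V' (G.tgt h)))
    (hB2'T : ∀ h : H, ∀ x ∈ Ts (G.src h), B2' h x = 0)
    (hi2' : ∀ k : I, ∀ w : W k, i2' k w = ((i2 k w : ↥(Vs k)) : V' k))
    (hj2'V : ∀ k : I, ∀ x : ↥(Vs k), j2' k (x : V' k) = j2 k x)
    (hj2'T : ∀ k : I, ∀ x ∈ Ts k, j2' k x = 0)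
    -- the extensions are in the same `G_{V'}`-orbit:
    (hg' : ∃ g' : ∀ k : I, V' k ≃L[ℂ] V' k,
      actB G V' g' B1' = B2' ∧ actI V' W g' i1' = i2' ∧ actJ V' W g' j1' = j2') :
    -- then the original data are in the same `G_V`-orbit:
    ∃ g : ∀ k : I, ↥(Vs k) ≃L[ℂ] ↥(Vs k),
      actB G (fun k => ↥(Vs k)) g B1 = B2 ∧
      actI (fun k => ↥(Vs k)) W g i1 = i2 ∧
      actJ (fun k => ↥(Vs k)) W g j1 = j2 := by
    classical
  obtain ⟨g', hB', hI', hJ'⟩ := hg'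
  obtain ⟨prV, prT, prV_coeV, prV_coeT, prT_coeV, prT_coeT, prVT⟩ :
      ∃ (pV : ∀ k, V' k →ₗ[ℂ] ↥(Vs k)) (pT : ∀ k, V' k →ₗ[ℂ] ↥(Ts k)),
        (∀ k (x : ↥(Vs k)), pV k (x : V' k) = x) ∧
        (∀ k (t : ↥(Ts k)), pV k (t : V' k) = 0) ∧
        (∀ k (x : ↥(Vs k)), pT k (x : V' k) = 0) ∧
        (∀ k (t : ↥(Ts k)), pT k (t : V' k) = t) ∧
        (∀ k (v : V' k), ((pV k v : V' k) + (pT k v : V' k)) = v) :=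
    ⟨fun k => (Vs k).projectionOnto (Ts k) (hcompl k),
      fun k => (Ts k).projectionOnto (Vs k) (hcompl k).symm,
      fun k x => Submodule.linearProjOfIsCompl_apply_left (hcompl k) x,
      fun k t => Submodule.linearProjOfIsCompl_apply_right (hcompl k) t,
      fun k x => Submodule.linearProjOfIsCompl_apply_right (hcompl k).symm x,
      fun k t => Submodule.linearProjOfIsCompl_apply_left (hcompl k).symm t,
      fun k v => Submodule.projection_add_projection_eq_self (hcompl k) v⟩
  obtain ⟨Am, Aspec⟩ : ∃ Am : ∀ k, ↥(Vs k) →ₗ[ℂ] ↥(Vs k),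
      ∀ k (x : ↥(Vs k)), Am k x = prV k (g' k (x : V' k)) :=
    ⟨fun k => (prV k) ∘ₗ ((g' k : V' k →L[ℂ] V' k) : V' k →ₗ[ℂ] V' k) ∘ₗ (Vs k).subtype,
      fun k x => rfl⟩
  obtain ⟨Bm, Bspec⟩ : ∃ Bm : ∀ k, ↥(Ts k) →ₗ[ℂ] ↥(Vs k),
      ∀ k (t : ↥(Ts k)), Bm k t = prV k (g' k (t : V' k)) :=
    ⟨fun k => (prV k) ∘ₗ ((g' k : V' k →L[ℂ] V' k) : V' k →ₗ[ℂ] V' k) ∘ₗ (Ts k).subtype,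
      fun k t => rfl⟩
  obtain ⟨Cm, Cspec⟩ : ∃ Cm : ∀ k, ↥(Vs k) →ₗ[ℂ] ↥(Ts k),
      ∀ k (x : ↥(Vs k)), Cm k x = prT k (g' k (x : V' k)) :=
    ⟨fun k => (prT k) ∘ₗ ((g' k : V' k →L[ℂ] V' k) : V' k →ₗ[ℂ] V' k) ∘ₗ (Vs k).subtype,
      fun k x => rfl⟩
  have gA : ∀ k (x : ↥(Vs k)),
      g' k (x : V' k) = ((Am k x : ↥(Vs k)) : V' k) + ((Cm k x : ↥(Ts k)) : V' k) := by
    intro k x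
    rw [Aspec, Cspec]
    exact (prVT k _).symm
  have gT : ∀ k (t : ↥(Ts k)),
      g' k (t : V' k)
        = ((Bm k t : ↥(Vs k)) : V' k) + ((prT k (g' k (t : V' k)) : ↥(Ts k)) : V' k) := by
    intro k t
    rw [Bspec]
    exact (prVT k _).symm
  have hBcomm : ∀ (h : H) (v : V' (G.src h)),
      g' (G.tgt h) (B1' h v) = B2' h (g' (G.src h) v) := by
    intro h v
    have e := ContinuousLinearMap.ext_iff.mp (congrFun hB' h) (g' (G.src h) v)
    simpa only [actB, ContinuousLinearMap.comp_apply, ContinuousLinearEquiv.coe_coe,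
      ContinuousLinearEquiv.symm_apply_apply] using e
  have hIcomm : ∀ k (w : W k), g' k (i1' k w) = i2' k w := by
    intro k w
    have e := ContinuousLinearMap.ext_iff.mp (congrFun hI' k) w
    simpa only [actI, ContinuousLinearMap.comp_apply, ContinuousLinearEquiv.coe_coe] using e
  have hJcomm : ∀ k (v : V' k), j1' k v = j2' k (g' k v) := by
    intro k v
    have e := ContinuousLinearMap.ext_iff.mp (congrFun hJ' k) (g' k v)
    simpa only [actJ, ContinuousLinearMap.comp_apply, ContinuousLinearEquiv.coe_coe,
      ContinuousLinearEquiv.symm_apply_apply] using e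
  have hE1 : ∀ (h : H) (x : ↥(Vs (G.src h))),
      Am (G.tgt h) (B1 h x) = B2 h (Am (G.src h) x) ∧ Cm (G.tgt h) (B1 h x) = 0 := by
    intro h x
    have key : ((Am (G.tgt h) (B1 h x) : ↥(Vs (G.tgt h))) : V' (G.tgt h))
        + ((Cm (G.tgt h) (B1 h x) : ↥(Ts (G.tgt h))) : V' (G.tgt h))
        = ((B2 h (Am (G.src h) x) : ↥(Vs (G.tgt h))) : V' (G.tgt h)) := by
      rw [← gA, ← hB1'V h x, hBcomm h (x : V' (G.src h)), gA (G.src h) x, map_add,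
        hB2'V h (Am (G.src h) x), hB2'T h _ (Cm (G.src h) x).2, add_zero]
    constructor
    · have e := congrArg (prV (G.tgt h)) key
      rw [map_add, prV_coeV, prV_coeT, add_zero, prV_coeV] at e
      exact e
    · have e := congrArg (prT (G.tgt h)) key
      rw [map_add, prT_coeV, prT_coeT, zero_add, prT_coeV] at e
      exact e
  have hE2 : ∀ (h : H) (t : ↥(Ts (G.src h))), B2 h (Bm (G.src h) t) = 0 := by
    intro h t
    have key : (0 : V' (G.tgt h))
        = ((B2 h (Bm (G.src h) t) : ↥(Vs (G.tgt h))) : V' (G.tgt h)) := by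
      calc (0 : V' (G.tgt h)) = g' (G.tgt h) (B1' h (t : V' (G.src h))) := by
            rw [hB1'T h _ t.2, map_zero]
        _ = B2' h (g' (G.src h) (t : V' (G.src h))) := hBcomm h _
        _ = ((B2 h (Bm (G.src h) t) : ↥(Vs (G.tgt h))) : V' (G.tgt h)) := by
            rw [gT (G.src h) t, map_add, hB2'V h (Bm (G.src h) t),
              hB2'T h _ (prT (G.src h) (g' (G.src h) (t : V' (G.src h)))).2, add_zero]
    exact_mod_cast key.symm
  have hE3 : ∀ k (w : W k), Am k (i1 k w) = i2 k w ∧ Cm k (i1 k w) = 0 := by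
    intro k w
    have key : ((Am k (i1 k w) : ↥(Vs k)) : V' k) + ((Cm k (i1 k w) : ↥(Ts k)) : V' k)
        = ((i2 k w : ↥(Vs k)) : V' k) := by
      rw [← gA, ← hi1' k w, hIcomm k w, hi2' k w]
    constructor
    · have e := congrArg (prV k) key
      rw [map_add, prV_coeV, prV_coeT, add_zero, prV_coeV] at e
      exact e
    · have e := congrArg (prT k) key
      rw [map_add, prT_coeV, prT_coeT, zero_add, prT_coeV] at e
      exact e
  have hE4a : ∀ k (x : ↥(Vs k)), j2 k (Am k x) = j1 k x := by
    intro k x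
    have e := hJcomm k (x : V' k)
    rw [hj1'V k x, gA k x, map_add, hj2'V k (Am k x), hj2'T k _ (Cm k x).2, add_zero] at e
    exact e.symm
  have hE4b : ∀ k (t : ↥(Ts k)), j2 k (Bm k t) = 0 := by
    intro k t
    have e := hJcomm k (t : V' k)
    rw [hj1'T k _ t.2, gT k t, map_add, hj2'V k (Bm k t),
      hj2'T k _ (prT k (g' k (t : V' k))).2, add_zero] at e
    exact e.symm
  have h1 : ∀ k (x : ↥(Vs k)), Am k x = 0 → Cm k x = 0 → x = 0 := by
    intro k x hA hC
    have e : g' k (x : V' k) = 0 := by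
      rw [gA k x, hA, hC]
      simp
    have hx0 : (x : V' k) = 0 := by
      have e2 := congrArg (g' k).symm e
      simpa using e2
    exact_mod_cast hx0
  have h2 : ∀ k (v : ↥(Vs k)), ∃ x t, Am k x + Bm k t = v := by
    intro k v
    refine ⟨prV k ((g' k).symm (v : V' k)), prT k ((g' k).symm (v : V' k)), ?_⟩
    have e : ((Am k (prV k ((g' k).symm (v : V' k))) : ↥(Vs k)) : V' k)
        + ((Cm k (prV k ((g' k).symm (v : V' k))) : ↥(Ts k)) : V' k)
        + (((Bm k (prT k ((g' k).symm (v : V' k)))) : V' k)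
          + ((prT k (g' k ((prT k ((g' k).symm (v : V' k))) : V' k)) : ↥(Ts k)) : V' k))
        = (v : V' k) := by
      rw [← gA, ← gT, ← map_add, prVT k ((g' k).symm (v : V' k)),
        ContinuousLinearEquiv.apply_symm_apply]
    have e2 := congrArg (prV k) e
    rw [map_add, map_add, map_add, prV_coeV, prV_coeT, prV_coeV, prV_coeT, prV_coeV] at e2
    simpa using e2
  choose Q hQ using fun k => key_exists (Am k) (Bm k) (Cm k) (h1 k) (h2 k)
  set gk : ∀ k, ↥(Vs k) ≃L[ℂ] ↥(Vs k) :=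
    fun k => (LinearEquiv.ofBijective (Am k + Bm k ∘ₗ Q k ∘ₗ Cm k) (hQ k)).toContinuousLinearEquiv
    with hgk
  have gapp : ∀ k (x : ↥(Vs k)), gk k x = Am k x + Bm k (Q k (Cm k x)) := by
    intro k x
    rw [hgk]
    simp [LinearEquiv.coe_toContinuousLinearEquiv', LinearEquiv.ofBijective_apply,
      LinearMap.add_apply, LinearMap.comp_apply]
  have gBcomm : ∀ (h : H) (y : ↥(Vs (G.src h))),
      Am (G.tgt h) (B1 h y) + Bm (G.tgt h) (Q (G.tgt h) (Cm (G.tgt h) (B1 h y)))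
      = B2 h (Am (G.src h) y + Bm (G.src h) (Q (G.src h) (Cm (G.src h) y))) := by
    intro h y
    rw [(hE1 h y).2, map_zero, map_zero, add_zero, (hE1 h y).1, map_add, hE2, add_zero]
  refine ⟨gk, ?_, ?_, ?_⟩
  · funext h
    ext x
    simp only [actB, ContinuousLinearMap.comp_apply, ContinuousLinearEquiv.coe_coe]
    have hs : gk (G.src h) ((gk (G.src h)).symm x) = x :=
      (gk (G.src h)).apply_symm_apply x
    rw [← hs, ContinuousLinearEquiv.symm_apply_apply, gapp, gapp]
    exact congrArg Subtype.val (gBcomm h ((gk (G.src h)).symm x))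
  · funext k
    ext w
    simp only [actI, ContinuousLinearMap.comp_apply, ContinuousLinearEquiv.coe_coe]
    rw [gapp, (hE3 k w).2, map_zero, map_zero, add_zero]
    exact congrArg Subtype.val (hE3 k w).1
  · funext k
    ext x
    simp only [actJ, ContinuousLinearMap.comp_apply, ContinuousLinearEquiv.coe_coe]
    have hs : gk k ((gk k).symm x) = x := (gk k).apply_symm_apply x
    rw [← hs, ContinuousLinearEquiv.symm_apply_apply, gapp, map_add, hE4a, hE4b, add_zero]
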